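/- arXiv:2204.10054 — 2 statements merged into one kernel-verified Lean document; each statement's English description precedes it below -/
import Mathlib

section
/- Let m > 1, 1 ≤ p < m, N ≥ 3. If f is a C² solution of the profile ODE (f^m)'' + ((N-1)/ξ)(f^m)' + (1/2)ξ f' + ξ^{-2} f^p = 0 on an interval where f > 0, and f is strictly decreasing on some initial interval (0,δ), then f is strictly decreasing on its entire positivity set. -/
/-!
At a critical point `c` of `f` inside the positivity set the profile equation reduces to
`(f^m)''(c) = -c⁻² f(c)^p < 0`. Since `(f^m)'(c) = 0`, the function `(f^m)' = m f^{m-1} f'` is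
positive just to the left of `c`, and so is `f'`. Hence `f'` can never reach `0` from below:
it is negative near `0` because `f` is decreasing there, and at the first point where `f' ≥ 0`
it would vanish while being negative on its left.
-/

open Real Set Filter Topology

lemma eventually_pos_nhdsLT_of_deriv_neg {h : ℝ → ℝ} {c : ℝ} (hd : deriv h c < 0)
    (hc : h c = 0) : ∀ᶠ ξ in 𝓝[<] c, 0 < h ξ := by
  filter_upwards [nhdsWithin_le_nhds (eventually_nhdsWithin_sign_eq_of_deriv_neg hd hc),
    self_mem_nhdsWithin] with ξ hsign (hξ : ξ < c)
  rwa [← sign_eq_one_iff, hsign, sign_eq_one_iff, sub_pos]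

lemma neg_on_Icc_of_frequently_pos_left_of_zero {φ : ℝ → ℝ} {a b : ℝ}
    (hφ : ContinuousOn φ (Icc a b)) (ha : φ a < 0)
    (hzero : ∀ c ∈ Ioc a b, φ c = 0 → ∃ᶠ ξ in 𝓝[<] c, 0 < φ ξ) :
    ∀ x ∈ Icc a b, φ x < 0 := by
  by_contra! ⟨x, hx, hφx⟩
  set K := Icc a b ∩ φ ⁻¹' Ici 0
  have hKbdd : BddBelow K := ⟨a, fun y hy => hy.1.1⟩
  have hcK : sInf K ∈ K :=
    (hφ.preimage_isClosed_of_isClosed isClosed_Icc isClosed_Ici).csInf_mem ⟨x, hx, hφx⟩ hKbdd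
  set c := sInf K
  have hac : a < c := hcK.1.1.lt_of_ne fun hca => (hca ▸ hcK.2 : 0 ≤ φ a).not_gt ha
  have hleft : ∀ᶠ ξ in 𝓝[<] c, φ ξ < 0 :=
    eventually_of_mem (Ioo_mem_nhdsLT hac) fun ξ hξ => not_le.mp fun h =>
      (csInf_le hKbdd ⟨⟨hξ.1.le, hξ.2.le.trans hcK.1.2⟩, h⟩).not_gt hξ.2
  have hφc : φ c = 0 := by
    refine le_antisymm (le_of_tendsto ?_ (hleft.mono fun _ h => h.le)) hcK.2
    rw [← nhdsWithin_Ioo_eq_nhdsLT hac]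
    exact (hφ c hcK.1).mono (Ioo_subset_Icc_self.trans (Icc_subset_Icc_right hcK.1.2))
  obtain ⟨ξ, hpos, hneg⟩ := ((hzero c ⟨hac, hcK.1.2⟩ hφc).and_eventually hleft).exists
  exact hpos.not_gt hneg

lemma deriv_neg_of_strictAntiOn_Ioo {f : ℝ → ℝ} {a b : ℝ} (hf : StrictAntiOn f (Ioo a b))
    (hcrit : ∀ c ∈ Ioo a b, deriv f c = 0 → ∃ᶠ ξ in 𝓝[<] c, 0 < deriv f ξ) :
    ∀ ξ ∈ Ioo a b, deriv f ξ < 0 := by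
  have hle : ∀ ξ ∈ Ioo a b, deriv f ξ ≤ 0 := fun ξ hξ => by
    rw [← derivWithin_of_isOpen isOpen_Ioo hξ]
    exact hf.antitoneOn.derivWithin_nonpos
  refine fun ξ hξ => (hle ξ hξ).lt_of_ne fun h0 => ?_
  obtain ⟨η, hpos, hη⟩ :=
    ((hcrit ξ hξ h0).and_eventually (Ioo_mem_nhdsLT hξ.1)).exists
  exact hpos.not_ge (hle η ⟨hη.1, hη.2.trans hξ.2⟩)

lemma eventually_deriv_pos_nhdsLT_of_profile_ode {m p : ℝ} {N : ℕ} {f : ℝ → ℝ} {c : ℝ}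
    (hm : 0 < m) (hf : Differentiable ℝ f) (hc : 0 < c) (hfc : 0 < f c)
    (hcrit : deriv f c = 0)
    (hode : deriv (deriv (fun s => f s ^ m)) c
        + ((N : ℝ) - 1) / c * deriv (fun s => f s ^ m) c
        + (1 / 2) * c * deriv f c
        + c ^ (-2 : ℝ) * f c ^ p = 0) :
    ∀ᶠ ξ in 𝓝[<] c, 0 < deriv f ξ := by
  have hg' : ∀ ξ, 0 < f ξ →
      deriv (fun s => f s ^ m) ξ = deriv f ξ * (m * f ξ ^ (m - 1)) := fun ξ hξ => by
    rw [deriv_rpow_const (hf ξ) (Or.inl hξ.ne'), mul_assoc]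
  have hg'c : deriv (fun s => f s ^ m) c = 0 := by rw [hg' c hfc, hcrit, zero_mul]
  have hg''c : deriv (deriv (fun s => f s ^ m)) c < 0 := by
    rw [hg'c, hcrit] at hode
    have : 0 < c ^ (-2 : ℝ) * f c ^ p := by positivity
    linarith
  have hfpos : ∀ᶠ ξ in 𝓝[<] c, 0 < f ξ :=
    nhdsWithin_le_nhds (continuousAt_const.eventually_lt (hf c).continuousAt hfc)
  filter_upwards [eventually_pos_nhdsLT_of_deriv_neg hg''c hg'c, hfpos] with ξ hgpos hfξ
  rw [hg' ξ hfξ] at hgpos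
  exact pos_of_mul_pos_left hgpos (by positivity)

theorem decreasing_on_positivity_set_general
    (m p : ℝ) (N : ℕ) (f : ℝ → ℝ) (ξ₀ δ : ℝ)
    (hm : 1 < m)
    (hf : ContDiff ℝ 2 f)
    (hδ : 0 < δ) (hδξ₀ : δ ≤ ξ₀)
    (hposset : ∀ ξ : ℝ, 0 < ξ → (0 < f ξ ↔ ξ < ξ₀))
    (hode : ∀ ξ ∈ Set.Ioo (0:ℝ) ξ₀,
      deriv (deriv (fun s => f s ^ m)) ξ
        + ((N : ℝ) - 1) / ξ * deriv (fun s => f s ^ m) ξ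
        + (1 / 2) * ξ * deriv f ξ
        + ξ ^ (-2 : ℝ) * f ξ ^ p = 0)
    (hdec : StrictAntiOn f (Set.Ioo 0 δ)) :
    StrictAntiOn f (Set.Ioo 0 ξ₀) := by
  have hfd : Differentiable ℝ f := hf.differentiable (by norm_num)
  have hcrit : ∀ c ∈ Ioo 0 ξ₀, deriv f c = 0 → ∀ᶠ ξ in 𝓝[<] c, 0 < deriv f ξ :=
    fun c hc h0 => eventually_deriv_pos_nhdsLT_of_profile_ode (by linarith) hfd hc.1
      ((hposset c hc.1).2 hc.2) h0 (hode c hc)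
  have hinit : ∀ ξ ∈ Ioo 0 δ, deriv f ξ < 0 := deriv_neg_of_strictAntiOn_Ioo hdec
    fun c hc h0 => (hcrit c ⟨hc.1, hc.2.trans_le hδξ₀⟩ h0).frequently
  have hneg : ∀ x ∈ Ioo 0 ξ₀, deriv f x < 0 := by
    intro x hx
    have he : min x (δ / 2) ∈ Ioo 0 δ :=
      ⟨lt_min hx.1 (half_pos hδ), (min_le_right _ _).trans_lt (half_lt_self hδ)⟩
    exact neg_on_Icc_of_frequently_pos_left_of_zero
      (hf.continuous_deriv (by norm_num)).continuousOn (hinit _ he)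
      (fun c hc h0 => (hcrit c ⟨he.1.trans hc.1, hc.2.trans_lt hx.2⟩ h0).frequently)
      x ⟨min_le_left _ _, le_rfl⟩
  exact strictAntiOn_of_deriv_neg (convex_Ioo 0 ξ₀) hfd.continuous.continuousOn
    (by rwa [interior_Ioo])

/-- a profile solving the self-similar ODE on its positivity set
(an interval (0,ξ₀)) which is strictly decreasing on some initial interval (0,δ)
is strictly decreasing on its entire positivity set. -/
theorem decreasing_on_positivity_set
    (m p : ℝ) (N : ℕ) (f : ℝ → ℝ) (ξ₀ δ : ℝ)
    (hm : 1 < m) (hp1 : 1 ≤ p) (hpm : p < m) (hN : 3 ≤ N)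
    (hf : ContDiff ℝ 2 f) (hfnn : ∀ ξ : ℝ, 0 ≤ f ξ)
    (hδ : 0 < δ) (hδξ₀ : δ ≤ ξ₀)
    (hposset : ∀ ξ : ℝ, 0 < ξ → (0 < f ξ ↔ ξ < ξ₀))
    (hode : ∀ ξ ∈ Set.Ioo (0:ℝ) ξ₀,
      deriv (deriv (fun s => f s ^ m)) ξ
        + ((N : ℝ) - 1) / ξ * deriv (fun s => f s ^ m) ξ
        + (1 / 2) * ξ * deriv f ξ
        + ξ ^ (-2 : ℝ) * f ξ ^ p = 0)
    (hdec : StrictAntiOn f (Set.Ioo 0 δ)) :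
    StrictAntiOn f (Set.Ioo 0 ξ₀) :=
  decreasing_on_positivity_set_general m p N f ξ₀ δ hm hf hδ hδξ₀ hposset hode hdec
end

section
/- The linearization of the system Ẋ = X((m-1)Y - 2X), Ẏ = -Y² - Y/2 - N X Y - X Z, Ż = Z((p-1)Y - 2X) at the critical point P₁ = (0,-1/2,0) has eigenvalues -(m-1)/2, 1/2, and -(p-1)/2; in particular, for m > 1 and 1 < p < m, P₁ is a hyperbolic saddle with a two-dimensional stable subspace and a one-dimensional unstable subspace. -/
/-!
The Jacobian of the field at P₁ is lower triangular, so its eigenvalues are its diagonal entries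
-(m-1)/2, 1/2, -(p-1)/2, read off the characteristic polynomial. For 1 < p < m these are three
distinct numbers; in dimension three, three distinct eigenvalues have independent nonzero
eigenspaces, so each is a line and the two stable ones span a plane.
-/

section
variable {K V : Type*} [Field K] [AddCommGroup V] [Module K V] [FiniteDimensional K V]

theorem Module.End.finrank_eigenspace_sup_of_ne (f : End K V) {a b : K} (hab : a ≠ b) :
    finrank K ↥(f.eigenspace a ⊔ f.eigenspace b) =
      finrank K (f.eigenspace a) + finrank K (f.eigenspace b) := by
  have := Submodule.finrank_sup_add_finrank_inf_eq (f.eigenspace a) (f.eigenspace b)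
  rwa [(f.eigenspaces_iSupIndep.pairwiseDisjoint hab).eq_bot, finrank_bot, add_zero] at this

theorem Module.End.finrank_eigenspace_eq_one_of_three_eigenvalues (hV : finrank K V = 3)
    {f : End K V} {a b c : K} (ha : f.HasEigenvalue a) (hb : f.HasEigenvalue b)
    (hc : f.HasEigenvalue c) (hab : a ≠ b) (hac : a ≠ c) (hbc : b ≠ c) :
    finrank K (f.eigenspace a) = 1 ∧ finrank K (f.eigenspace b) = 1 ∧
      finrank K (f.eigenspace c) = 1 := by
  -- the three eigenspaces are nonzero and independent, so their dimensions sum to at most 3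
  have hpos : ∀ μ, f.HasEigenvalue μ → 0 < finrank K (f.eigenspace μ) := fun μ hμ =>
    Nat.pos_of_ne_zero fun h => hμ (Submodule.finrank_eq_zero.mp h)
  have hdisj : Disjoint (f.eigenspace a ⊔ f.eigenspace c) (f.eigenspace b) :=
    (f.eigenspaces_iSupIndep b).symm.mono_left
      (sup_le (le_iSup₂ (f := fun μ (_ : μ ≠ b) => f.eigenspace μ) a hab)
        (le_iSup₂ (f := fun μ (_ : μ ≠ b) => f.eigenspace μ) c hbc.symm))
  have hsum := Submodule.finrank_add_finrank_le_of_disjoint hdisj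
  rw [f.finrank_eigenspace_sup_of_ne hac, hV] at hsum
  have hposa := hpos a ha
  have hposb := hpos b hb
  have hposc := hpos c hc
  omega
end

theorem Matrix.hasEigenvalue_mulVecLin_lowerTriangular_fin_three_iff {K : Type*} [Field K]
    (a b d c e g μ : K) :
    Module.End.HasEigenvalue (Matrix.mulVecLin !![a, 0, 0; c, b, 0; e, g, d]) μ ↔
      μ = a ∨ μ = b ∨ μ = d := by
  rw [Module.End.hasEigenvalue_iff_isRoot_charpoly, Matrix.charpoly_mulVecLin, Polynomial.IsRoot,
    Matrix.eval_charpoly, Matrix.det_fin_three]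
  simp [Matrix.scalar_apply, sub_eq_zero, or_assoc]

/-- The phase-space variables `(X, Y, Z)` are the coordinates `(v 0, v 1, v 2)`. -/
noncomputable def selfSimilarField (m p N : ℝ) (v : Fin 3 → ℝ) : Fin 3 → ℝ :=
  ![v 0 * ((m - 1) * v 1 - 2 * v 0),
    -(v 1) ^ 2 - v 1 / 2 - N * v 0 * v 1 - v 0 * v 2,
    v 2 * ((p - 1) * v 1 - 2 * v 0)]

noncomputable def selfSimilarJacobian (m p N : ℝ) (v : Fin 3 → ℝ) : Matrix (Fin 3) (Fin 3) ℝ :=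
  !![(m - 1) * v 1 - 4 * v 0, (m - 1) * v 0, 0;
    -N * v 1 - v 2, -2 * v 1 - 1 / 2 - N * v 0, -v 0;
    -2 * v 2, (p - 1) * v 2, (p - 1) * v 1 - 2 * v 0]

theorem hasFDerivAt_selfSimilarField (m p N : ℝ) (v : Fin 3 → ℝ) :
    HasFDerivAt (selfSimilarField m p N)
      (selfSimilarJacobian m p N v).mulVecLin.toContinuousLinearMap v := by
  have h : ∀ i, HasFDerivAt (fun w : Fin 3 → ℝ => w i)
      (ContinuousLinearMap.proj (R := ℝ) (φ := fun _ : Fin 3 => ℝ) i) v :=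
    fun i => hasFDerivAt_apply i v
  rw [hasFDerivAt_pi']
  intro i
  fin_cases i
  · refine ((h 0).mul (((h 1).const_mul (m - 1)).sub ((h 0).const_mul 2))).congr_fderiv ?_
    ext w
    simp [selfSimilarJacobian, dotProduct, Fin.sum_univ_three]
    ring
  · refine ((((h 1).pow 2).neg.sub ((h 1).mul_const 2⁻¹)).sub
      (((h 0).const_mul N).mul (h 1))).sub ((h 0).mul (h 2)) |>.congr_fderiv ?_
    ext w
    simp [selfSimilarJacobian, dotProduct, Fin.sum_univ_three]
    ring
  · refine ((h 2).mul (((h 1).const_mul (p - 1)).sub ((h 0).const_mul 2))).congr_fderiv ?_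
    ext w
    simp [selfSimilarJacobian, dotProduct, Fin.sum_univ_three]
    ring

theorem selfSimilarJacobian_P1 (m p N : ℝ) :
    selfSimilarJacobian m p N ![0, -1 / 2, 0] =
      !![-(m - 1) / 2, 0, 0; N / 2, 1 / 2, 0; 0, 0, -(p - 1) / 2] := by
  ext i j
  fin_cases i <;> fin_cases j <;> simp [selfSimilarJacobian] <;> ring

theorem linearization_at_P1_general
    (m p : ℝ) (N : ℕ)
    (hp : 1 < p) (hpm : p < m)
    (F : (Fin 3 → ℝ) → (Fin 3 → ℝ))
    (hF : F = fun v => ![v 0 * ((m - 1) * v 1 - 2 * v 0),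
      -(v 1) ^ 2 - v 1 / 2 - (N : ℝ) * v 0 * v 1 - v 0 * v 2,
      v 2 * ((p - 1) * v 1 - 2 * v 0)])
    (J : Matrix (Fin 3) (Fin 3) ℝ)
    (hJ : J = ![![-(m - 1) / 2, 0, 0], ![(N : ℝ) / 2, 1 / 2, 0],
      ![0, 0, -(p - 1) / 2]]) :
    HasFDerivAt F (J.mulVecLin.toContinuousLinearMap) ![0, -1/2, 0] ∧
    (∀ μ : ℝ, Module.End.HasEigenvalue (J.mulVecLin : Module.End ℝ (Fin 3 → ℝ)) μ ↔
      (μ = -(m - 1) / 2 ∨ μ = 1 / 2 ∨ μ = -(p - 1) / 2)) ∧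
    -(m - 1) / 2 < 0 ∧ (0:ℝ) < 1 / 2 ∧ -(p - 1) / 2 < 0 ∧
    Module.finrank ℝ
      ↥(Module.End.eigenspace (J.mulVecLin : Module.End ℝ (Fin 3 → ℝ)) (-(m - 1) / 2)
        ⊔ Module.End.eigenspace (J.mulVecLin : Module.End ℝ (Fin 3 → ℝ)) (-(p - 1) / 2)) = 2 ∧
    Module.finrank ℝ
      ↥(Module.End.eigenspace (J.mulVecLin : Module.End ℝ (Fin 3 → ℝ)) (1 / 2)) = 1 := by
  subst hF hJ
  have hder := hasFDerivAt_selfSimilarField m p N ![0, -1 / 2, 0]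
  rw [selfSimilarJacobian_P1] at hder
  have heig := Matrix.hasEigenvalue_mulVecLin_lowerTriangular_fin_three_iff
    (-(m - 1) / 2) (1 / 2) (-(p - 1) / 2) ((N : ℝ) / 2) 0 0
  have hab : -(m - 1) / 2 ≠ (1 / 2 : ℝ) := by intro h; linarith
  have hac : -(m - 1) / 2 ≠ -(p - 1) / 2 := by intro h; linarith
  have hbc : (1 / 2 : ℝ) ≠ -(p - 1) / 2 := by intro h; linarith
  obtain ⟨ha, hb, hc⟩ := Module.End.finrank_eigenspace_eq_one_of_three_eigenvalues
    (Module.finrank_fin_fun ℝ) ((heig _).2 (Or.inl rfl)) ((heig _).2 (Or.inr (Or.inl rfl)))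
    ((heig _).2 (Or.inr (Or.inr rfl))) hab hac hbc
  refine ⟨hder, heig, by linarith, by norm_num, by linarith, ?_, hb⟩
  exact (Module.End.finrank_eigenspace_sup_of_ne _ hac).trans (congrArg₂ (· + ·) ha hc)

/-- the linearization of the system at P₁ = (0,-1/2,0) is the matrix
[[-(m-1)/2, 0, 0], [N/2, 1/2, 0], [0, 0, -(p-1)/2]]; its eigenvalues are exactly
-(m-1)/2, 1/2 and -(p-1)/2; for m > 1, 1 < p < m this is a hyperbolic saddle with
a two-dimensional stable subspace and a one-dimensional unstable subspace. -/
theorem linearization_at_P1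
    (m p : ℝ) (N : ℕ)
    (hm : 1 < m) (hp : 1 < p) (hpm : p < m) (hN : 3 ≤ N)
    (F : (Fin 3 → ℝ) → (Fin 3 → ℝ))
    (hF : F = fun v => ![v 0 * ((m - 1) * v 1 - 2 * v 0),
      -(v 1) ^ 2 - v 1 / 2 - (N : ℝ) * v 0 * v 1 - v 0 * v 2,
      v 2 * ((p - 1) * v 1 - 2 * v 0)])
    (J : Matrix (Fin 3) (Fin 3) ℝ)
    (hJ : J = ![![-(m - 1) / 2, 0, 0], ![(N : ℝ) / 2, 1 / 2, 0],
      ![0, 0, -(p - 1) / 2]]) :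
    HasFDerivAt F (J.mulVecLin.toContinuousLinearMap) ![0, -1/2, 0] ∧
    (∀ μ : ℝ, Module.End.HasEigenvalue (J.mulVecLin : Module.End ℝ (Fin 3 → ℝ)) μ ↔
      (μ = -(m - 1) / 2 ∨ μ = 1 / 2 ∨ μ = -(p - 1) / 2)) ∧
    -(m - 1) / 2 < 0 ∧ (0:ℝ) < 1 / 2 ∧ -(p - 1) / 2 < 0 ∧
    Module.finrank ℝ
      ↥(Module.End.eigenspace (J.mulVecLin : Module.End ℝ (Fin 3 → ℝ)) (-(m - 1) / 2)
        ⊔ Module.End.eigenspace (J.mulVecLin : Module.End ℝ (Fin 3 → ℝ)) (-(p - 1) / 2)) = 2 ∧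
    Module.finrank ℝ
      ↥(Module.End.eigenspace (J.mulVecLin : Module.End ℝ (Fin 3 → ℝ)) (1 / 2)) = 1 :=
  linearization_at_P1_general m p N hp hpm F hF J hJ
end
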